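/- arXiv:2312.07155 — 5 statements merged into one kernel-verified Lean document; each statement's English description precedes it below -/
import Mathlib

section
/- Let ζ₁ : ℂ → ℂ be differentiable at 0, let m ∈ ℕ, and let λ : Fin m → ℂ be a finite family of nonzero complex numbers. Define ζ₂ : ℂ → ℂ by ζ₂(s) = ζ₁(s) + (exp(−2πis) − 1) · Σ_{k=0}^{m−1} exp(−s · Log(λ k)), where Log is the principal complex logarithm. Then ζ₂ is differentiable at 0 and exp(−ζ₂′(0)) = exp(−ζ₁′(0)). (This expresses that moving the branch cut of the logarithm through finitely many eigenvalues, which changes the chosen logarithm of each of them by 2πi, does not change the spectral determinant exp(−ζ′(0)).) -/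
/-!
The correction term `(exp(−2πis) − 1) · Σₖ λₖ^{−s}` vanishes at `s = 0`, so by the product rule
its derivative there is `−2πi · Σₖ 1 = −2πi m`. Hence `ζ₂′(0) = ζ₁′(0) − 2πi m`, and `exp` does not
see an integer multiple of `2πi`.
-/

open Complex

theorem HasDerivAt.mul_of_left_eq_zero {𝕜 : Type*} [NontriviallyNormedField 𝕜] {f g : 𝕜 → 𝕜}
    {f' g' x : 𝕜} (hf : HasDerivAt f f' x)
    (hfx : f x = 0) (hg : HasDerivAt g g' x) :
    HasDerivAt (fun y => f y * g y) (f' * g x) x := by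
  simpa [hfx] using hf.fun_mul hg

theorem hasDerivAt_cexp_mul_sub_one (c : ℂ) :
    HasDerivAt (fun s : ℂ => exp (c * s) - 1) c 0 := by
  simpa using ((hasDerivAt_id (0 : ℂ)).const_mul c).cexp.sub_const 1

theorem hasDerivAt_branch_shift {ι : Type*} [Fintype ι] (L : ι → ℂ) :
    HasDerivAt (fun s : ℂ => (exp (-2 * Real.pi * I * s) - 1) * ∑ k, exp (-s * L k))
      (-2 * Real.pi * I * Fintype.card ι) 0 := by
  have hsum : DifferentiableAt ℂ (fun s : ℂ => ∑ k, exp (-s * L k)) 0 := by fun_prop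
  simpa using (hasDerivAt_cexp_mul_sub_one (-2 * Real.pi * I)).mul_of_left_eq_zero (by simp)
    hsum.hasDerivAt

theorem cexp_neg_add_two_pi_I_mul_natCast (z : ℂ) (n : ℕ) :
    exp (-(z + -2 * Real.pi * I * n)) = exp (-z) := by
  rw [show -(z + -2 * Real.pi * I * n) = -z + n * (2 * Real.pi * I) by ring,
    exp_add, exp_nat_mul_two_pi_mul_I, mul_one]

theorem det_invariant_finitely_many_eigenvalues_general
    (ζ₁ : ℂ → ℂ) (hζ₁ : DifferentiableAt ℂ ζ₁ 0)
    (m : ℕ) (lam : Fin m → ℂ)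
    (ζ₂ : ℂ → ℂ)
    (hζ₂ : ∀ s : ℂ, ζ₂ s =
      ζ₁ s + (Complex.exp (-2 * Real.pi * Complex.I * s) - 1) *
        ∑ k : Fin m, Complex.exp (-s * Complex.log (lam k))) :
    DifferentiableAt ℂ ζ₂ 0 ∧
      Complex.exp (-(deriv ζ₂ 0)) = Complex.exp (-(deriv ζ₁ 0)) := by
  have hshift := hasDerivAt_branch_shift fun k => Complex.log (lam k)
  rw [Fintype.card_fin] at hshift
  have hderiv : HasDerivAt ζ₂ (deriv ζ₁ 0 + -2 * Real.pi * I * m) 0 := by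
    rw [funext hζ₂]
    exact hζ₁.hasDerivAt.add hshift
  exact ⟨hderiv.differentiableAt, by rw [hderiv.deriv, cexp_neg_add_two_pi_I_mul_natCast]⟩

/-- Moving the branch cut of the logarithm through finitely many eigenvalues
(which changes the chosen logarithm of each of them by `2πi`) does not change the
spectral determinant `exp(−ζ′(0))`. -/
theorem det_invariant_finitely_many_eigenvalues
    (ζ₁ : ℂ → ℂ) (hζ₁ : DifferentiableAt ℂ ζ₁ 0)
    (m : ℕ) (lam : Fin m → ℂ) (hlam : ∀ k, lam k ≠ 0)
    (ζ₂ : ℂ → ℂ)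
    (hζ₂ : ∀ s : ℂ, ζ₂ s =
      ζ₁ s + (Complex.exp (-2 * Real.pi * Complex.I * s) - 1) *
        ∑ k : Fin m, Complex.exp (-s * Complex.log (lam k))) :
    DifferentiableAt ℂ ζ₂ 0 ∧
      Complex.exp (-(deriv ζ₂ 0)) = Complex.exp (-(deriv ζ₁ 0)) :=
  det_invariant_finitely_many_eigenvalues_general ζ₁ hζ₁ m lam ζ₂ hζ₂
end

section
/- Let T > 0 be real and define F : ℂ → ℂ by F(s) = 2 · exp(s · log(T/π)) · cos(πs/2) · ζ_R(s), where ζ_R is the Riemann zeta function and log(T/π) is the real logarithm. Then F is differentiable at 0, its derivative at 0 equals −log(2T), and consequently exp(−F′(0)) = 2T. -/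
/-!
Since `cos (π s / 2)` is stationary at `0` with value `1`, the product rule gives
`F'(0) = 2 log (T / π) ζ(0) + 2 ζ'(0)`, and with `ζ(0) = -1/2`, `ζ'(0) = -log (2π) / 2` this is
`-log (T / π) - log (2π) = -log (2T)`.
-/

open Complex Real

theorem hasDerivAt_riemannZeta_zero :
    HasDerivAt riemannZeta (-Complex.log (2 * π) / 2) 0 := by
  rw [← deriv_riemannZeta_zero]
  exact (differentiableAt_riemannZeta zero_ne_one).hasDerivAt

theorem hasDerivAt_two_mul_cexp_mul_cos_mul_riemannZeta_zero (L : ℂ) :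
    HasDerivAt (fun s : ℂ => 2 * cexp (s * L) * Complex.cos (π * s / 2) * riemannZeta s)
      (-(L + Complex.log (2 * π))) 0 := by
  have hexp : HasDerivAt (fun s : ℂ => 2 * cexp (s * L)) (2 * L) 0 := by
    simpa using (((hasDerivAt_id (0 : ℂ)).mul_const L).cexp).const_mul (2 : ℂ)
  have hcos : HasDerivAt (fun s : ℂ => Complex.cos (π * s / 2)) 0 0 := by
    simpa using (((hasDerivAt_id (0 : ℂ)).const_mul (π : ℂ)).div_const 2).ccos
  refine ((hexp.mul hcos).mul hasDerivAt_riemannZeta_zero).congr_deriv ?_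
  simp only [Pi.mul_apply, zero_mul, mul_zero, zero_div, Complex.exp_zero, Complex.cos_zero,
    riemannZeta_zero]
  ring

theorem Real.log_div_pi_add_log_two_mul_pi {T : ℝ} (hT : T ≠ 0) :
    Real.log (T / π) + Real.log (2 * π) = Real.log (2 * T) := by
  rw [Real.log_div hT pi_ne_zero, Real.log_mul two_ne_zero pi_ne_zero,
    Real.log_mul two_ne_zero hT]
  ring

/-- The continued spectral zeta function `F(s) = 2 exp(s log(T/π)) cos(πs/2) ζ_R(s)`
of the undamped wave operator (branch cut on the negative real axis) is differentiable
at `0`, has `F′(0) = −log(2T)`, and the spectral determinant is `exp(−F′(0)) = 2T`. -/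
theorem dwe_determinant_negative_axis_cut
    (T : ℝ) (hT : 0 < T) (F : ℂ → ℂ)
    (hF : ∀ s : ℂ, F s =
      2 * Complex.exp (s * Real.log (T / Real.pi)) * Complex.cos (Real.pi * s / 2) *
        riemannZeta s) :
    DifferentiableAt ℂ F 0 ∧
      deriv F 0 = -Real.log (2 * T) ∧
      Complex.exp (-(deriv F 0)) = 2 * T := by
  have hlog : (Real.log (T / π) : ℂ) + Complex.log (2 * π) = Real.log (2 * T) := by
    rw [← Real.log_div_pi_add_log_two_mul_pi hT.ne', ← ofReal_ofNat, ← ofReal_mul,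
      ← ofReal_log (by positivity)]
    push_cast
    ring
  have hFD : HasDerivAt F (-Real.log (2 * T)) 0 := by
    rw [funext hF, ← hlog]
    exact hasDerivAt_two_mul_cexp_mul_cos_mul_riemannZeta_zero _
  refine ⟨hFD.differentiableAt, hFD.deriv, ?_⟩
  rw [hFD.deriv, neg_neg, ← ofReal_exp, Real.exp_log (by positivity)]
  push_cast
  ring
end

section
/- Let T > 0 be real and let s ∈ ℂ with Re s > 1. Then the series Σ_{j=1}^∞ [ exp(−s · (log(jπ/T) + iπ/2)) + exp(−s · (log(jπ/T) + 3iπ/2)) ], where log(jπ/T) is the real logarithm, converges and equals 2 · exp(−iπs) · exp(s · log(T/π)) · cos(πs/2) · ζ_R(s), where ζ_R is the Riemann zeta function. -/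
/-!
The eigenvalues `±(jπ/T)i` share the modulus `jπ/T` and differ only in their arguments
`π/2` and `3π/2`, so the `j`-th pair contributes `(jπ/T)^{-s}` times
`e^{-iπs/2} + e^{-3iπs/2} = 2 e^{-iπs} cos(πs/2)`. Summing `(jπ/T)^{-s} = (T/π)^s j^{-s}` over `j`
gives `ζ(s)` for `Re s > 1`.
-/

open Complex Real

lemma exp_half_add_exp_three_half_eq_cos (s u c : ℂ) :
    cexp (-s * (u + I * c / 2)) + cexp (-s * (u + 3 * I * c / 2)) =
      2 * cexp (-(I * c * s)) * cexp (-s * u) * Complex.cos (c * s / 2) := by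
  have h₁ : cexp (-s * (u + I * c / 2)) =
      cexp (-(I * c * s)) * cexp (-s * u) * cexp (c * s / 2 * I) := by
    rw [← Complex.exp_add, ← Complex.exp_add]; ring_nf
  have h₃ : cexp (-s * (u + 3 * I * c / 2)) =
      cexp (-(I * c * s)) * cexp (-s * u) * cexp (-(c * s / 2) * I) := by
    rw [← Complex.exp_add, ← Complex.exp_add]; ring_nf
  rw [h₁, h₃, Complex.cos]
  ring

lemma cexp_neg_mul_log_mul_div {x a b : ℝ} (hx : 0 < x) (ha : 0 < a) (hb : 0 < b) (s : ℂ) :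
    cexp (-s * Real.log (x * a / b)) = cexp (s * Real.log (b / a)) * (1 / (x : ℂ) ^ s) := by
  have hlog : Real.log (x * a / b) = Real.log x - Real.log (b / a) := by
    rw [Real.log_div (by positivity) hb.ne', Real.log_mul hx.ne' ha.ne',
      Real.log_div hb.ne' ha.ne']
    ring
  rw [cpow_def_of_ne_zero (ofReal_ne_zero.mpr hx.ne'), ← ofReal_log hx.le, one_div,
    ← Complex.exp_neg, ← Complex.exp_add, hlog]
  push_cast
  ring_nf

lemma hasSum_one_div_nat_add_one_cpow {s : ℂ} (hs : 1 < s.re) :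
    HasSum (fun n : ℕ => 1 / ((n : ℂ) + 1) ^ s) (riemannZeta s) := by
  have hsum : Summable (fun n : ℕ => 1 / ((n : ℂ) + 1) ^ s) := by
    simpa using (summable_nat_add_iff 1).mpr (summable_one_div_nat_cpow.mpr hs)
  exact zeta_eq_tsum_one_div_nat_add_one_cpow hs ▸ hsum.hasSum

/-- For the undamped wave operator on an interval of length `T` (eigenvalues
`±(jπ/T)i`), with the branch cut on the positive real axis (arguments in `(0, 2π)`),
the spectral zeta series converges for `Re s > 1` and equals
`2 exp(−iπs) exp(s log(T/π)) cos(πs/2) ζ_R(s)`. -/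
theorem dwe_zeta_series_positive_axis_cut
    (T : ℝ) (hT : 0 < T) (s : ℂ) (hs : 1 < s.re) :
    HasSum
      (fun j : ℕ =>
        Complex.exp (-s * (Real.log (((j : ℝ) + 1) * Real.pi / T) +
          Complex.I * Real.pi / 2)) +
        Complex.exp (-s * (Real.log (((j : ℝ) + 1) * Real.pi / T) +
          3 * Complex.I * Real.pi / 2)))
      (2 * Complex.exp (-(Complex.I * Real.pi * s)) *
        Complex.exp (s * Real.log (T / Real.pi)) * Complex.cos (Real.pi * s / 2) *
        riemannZeta s) := by
  refine ((hasSum_one_div_nat_add_one_cpow hs).mul_left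
    (2 * cexp (-(I * π * s)) * cexp (s * Real.log (T / π)) * Complex.cos (π * s / 2))).congr_fun
    fun j => ?_
  rw [exp_half_add_exp_three_half_eq_cos,
    cexp_neg_mul_log_mul_div (Nat.cast_add_one_pos j) pi_pos hT]
  push_cast
  ring
end

section
/- Let c₁ > 0, c₂ > 0, and α be real, and define F : ℂ → ℂ by F(s) = exp(−s·(log c₁ + iα)) / (exp(c₂·s) − 1). Then the real part of −F′(s), evaluated along real s, tends to +∞ as s → 0 from the right; consequently the modulus of exp(−F′(s)) tends to +∞ as s → 0⁺ along the reals. In words: for a ray of exponentially growing eigenvalues, the spectral determinant exp(−ζ′(0)) diverges to +∞ and cannot be defined. -/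
/-!
Near `s = 0` the zeta function `F(s) = exp(-s a) / (exp(c₂ s) - 1)` behaves like `1 / (c₂ s)`,
so `-F'(s)` behaves like `1 / (c₂ s²)`. Precisely, since `s / (exp(c₂ s) - 1) → 1 / c₂`
(the slope of `exp(c₂ ·)` at `0` is `c₂`), the quotient rule gives `s² · (-F'(s)) → 1 / c₂ > 0`.
Hence `Re(-F'(s)) → +∞` as `s → 0⁺`, and `‖exp(-F'(s))‖ = exp(Re(-F'(s))) → +∞`.
-/

open Complex Real Filter Topology

/-- `∑_{j ≥ 1} exp(-z (a + c j))`, the zeta function of the eigenvalues `exp(a + c j)`,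
summed as a geometric series. -/
noncomputable def geomZeta (a c z : ℂ) : ℂ :=
  Complex.exp (-z * a) / (Complex.exp (c * z) - 1)

section

variable (a c : ℂ)

theorem hasDerivAt_geomZeta {z : ℂ} (hz : Complex.exp (c * z) ≠ 1) :
    HasDerivAt (geomZeta a c)
      (-(Complex.exp (-z * a) * (a * (Complex.exp (c * z) - 1) + c * Complex.exp (c * z)) /
        (Complex.exp (c * z) - 1) ^ 2)) z := by
  have hnum : HasDerivAt (fun z => Complex.exp (-z * a)) (Complex.exp (-z * a) * -a) z := by
    simpa using ((hasDerivAt_id z).neg.mul_const a).cexp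
  have hden : HasDerivAt (fun z => Complex.exp (c * z) - 1) (Complex.exp (c * z) * c) z := by
    simpa using ((hasDerivAt_id z).const_mul c).cexp.sub_const 1
  exact (hnum.div hden (sub_ne_zero.2 hz)).congr_deriv (by ring)

theorem tendsto_exp_mul_sub_one_div :
    Tendsto (fun z => (Complex.exp (c * z) - 1) / z) (𝓝[≠] 0) (𝓝 c) := by
  have h : HasDerivAt (fun z => Complex.exp (c * z)) c 0 := by
    simpa using ((hasDerivAt_id (0 : ℂ)).const_mul c).cexp
  simpa [div_eq_inv_mul] using h.tendsto_slope_zero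

variable {c}

theorem tendsto_div_exp_mul_sub_one (hc : c ≠ 0) :
    Tendsto (fun z => z / (Complex.exp (c * z) - 1)) (𝓝[≠] 0) (𝓝 c⁻¹) := by
  simpa using (tendsto_exp_mul_sub_one_div c).inv₀ hc

theorem eventually_exp_mul_ne_one (hc : c ≠ 0) :
    ∀ᶠ z in 𝓝[≠] (0 : ℂ), Complex.exp (c * z) ≠ 1 := by
  filter_upwards [(tendsto_exp_mul_sub_one_div c).eventually_ne hc] with z hz
  intro h
  simp [h] at hz

theorem tendsto_sq_mul_neg_deriv_geomZeta (hc : c ≠ 0) :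
    Tendsto (fun z => z ^ 2 * -deriv (geomZeta a c) z) (𝓝[≠] 0) (𝓝 c⁻¹) := by
  -- `z² (-F'(z)) = exp(-z a) (a z q(z) + c exp(c z) q(z)²)`, and `q(z) → c⁻¹`
  set q := fun z : ℂ => z / (Complex.exp (c * z) - 1)
  have hq := tendsto_div_exp_mul_sub_one hc
  have hcont {f : ℂ → ℂ} (hf : Continuous f) : Tendsto f (𝓝[≠] 0) (𝓝 (f 0)) :=
    hf.continuousAt.tendsto.mono_left nhdsWithin_le_nhds
  have hlim : Tendsto (fun z => Complex.exp (-z * a) *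
      (a * z * q z + c * Complex.exp (c * z) * q z ^ 2)) (𝓝[≠] 0)
      (𝓝 (Complex.exp (-0 * a) * (a * 0 * c⁻¹ + c * Complex.exp (c * 0) * c⁻¹ ^ 2))) :=
    (hcont (by fun_prop)).mul (((hcont (by fun_prop)).mul hq).add
      ((hcont (by fun_prop)).mul (hq.pow 2)))
  have hval :
      Complex.exp (-0 * a) * (a * 0 * c⁻¹ + c * Complex.exp (c * 0) * c⁻¹ ^ 2) = c⁻¹ := by
    field_simp
    simp
  rw [hval] at hlim
  refine hlim.congr' ?_
  filter_upwards [eventually_exp_mul_ne_one hc] with z hz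
  have hd : Complex.exp (c * z) - 1 ≠ 0 := sub_ne_zero.2 hz
  rw [(hasDerivAt_geomZeta a c hz).deriv]
  simp only [q]
  field_simp

end

theorem tendsto_atTop_of_sq_mul_tendsto {f : ℝ → ℝ} {L : ℝ} (hL : 0 < L)
    (h : Tendsto (fun s => s ^ 2 * f s) (𝓝[>] 0) (𝓝 L)) : Tendsto f (𝓝[>] 0) atTop := by
  have hinv : Tendsto (fun s : ℝ => s⁻¹ * s⁻¹) (𝓝[>] 0) atTop :=
    tendsto_inv_nhdsGT_zero.atTop_mul_atTop₀ tendsto_inv_nhdsGT_zero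
  refine (h.pos_mul_atTop hL hinv).congr' ?_
  filter_upwards [self_mem_nhdsWithin] with s hs
  have : s ≠ 0 := ne_of_gt hs
  field_simp

theorem tendsto_ofReal_nhdsGT_nhdsNE :
    Tendsto (fun s : ℝ => (s : ℂ)) (𝓝[>] 0) (𝓝[≠] 0) :=
  continuous_ofReal.continuousWithinAt.tendsto_nhdsWithin fun s hs => by
    simpa using ne_of_gt hs

theorem exponential_growth_determinant_diverges_general
    (c₁ c₂ α : ℝ) (hc₂ : 0 < c₂)
    (F : ℂ → ℂ)
    (hF : ∀ s : ℂ, F s = Complex.exp (-s * (Real.log c₁ + Complex.I * α)) /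
      (Complex.exp (c₂ * s) - 1)) :
    Tendsto (fun s : ℝ => (-(deriv F (s : ℂ))).re)
      (nhdsWithin 0 (Set.Ioi (0 : ℝ))) atTop ∧
    Tendsto (fun s : ℝ => ‖Complex.exp (-(deriv F (s : ℂ)))‖)
      (nhdsWithin 0 (Set.Ioi (0 : ℝ))) atTop := by
  have hF : F = geomZeta (Real.log c₁ + Complex.I * α) c₂ := funext hF
  have hlim := (tendsto_sq_mul_neg_deriv_geomZeta (Real.log c₁ + Complex.I * α)
    (ofReal_ne_zero.2 hc₂.ne')).comp tendsto_ofReal_nhdsGT_nhdsNE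
  have hre : Tendsto (fun s : ℝ => (-(deriv F (s : ℂ))).re) (𝓝[>] 0) atTop := by
    refine tendsto_atTop_of_sq_mul_tendsto (inv_pos.2 hc₂) ?_
    convert (continuous_re.tendsto _).comp hlim using 1
    · ext s
      simp [hF, ← ofReal_pow]
    · simp [← ofReal_inv]
  refine ⟨hre, ?_⟩
  simp only [norm_exp]
  exact tendsto_exp_atTop.comp hre

/-- For a ray of exponentially growing eigenvalues, with
`F(s) = exp(−s(log c₁ + iα)) / (exp(c₂ s) − 1)` the continuation of the spectral
zeta function, the real part of `−F′(s)` tends to `+∞` as `s → 0⁺` along the reals;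
consequently `|exp(−F′(s))| → +∞`, so the spectral determinant diverges to `+∞`. -/
theorem exponential_growth_determinant_diverges
    (c₁ c₂ α : ℝ) (hc₁ : 0 < c₁) (hc₂ : 0 < c₂)
    (F : ℂ → ℂ)
    (hF : ∀ s : ℂ, F s = Complex.exp (-s * (Real.log c₁ + Complex.I * α)) /
      (Complex.exp (c₂ * s) - 1)) :
    Tendsto (fun s : ℝ => (-(deriv F (s : ℂ))).re)
      (nhdsWithin 0 (Set.Ioi (0 : ℝ))) atTop ∧
    Tendsto (fun s : ℝ => ‖Complex.exp (-(deriv F (s : ℂ)))‖)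
      (nhdsWithin 0 (Set.Ioi (0 : ℝ))) atTop :=
  exponential_growth_determinant_diverges_general c₁ c₂ α hc₂ F hF
end

section
/- Let b be real and let H, K : ℂ → ℂ be differentiable at 0 with H(0) = −1/2 + i·b. Define ζ₁(s) = exp(−iπs/2)·H(s) + exp(−3iπs/2)·K(s) and ζ₂(s) = exp(−5iπs/2)·H(s) + exp(−3iπs/2)·K(s). Then ζ₁ and ζ₂ are differentiable at 0 and exp(−ζ₁′(0)) = −exp(2bπ) · exp(−ζ₂′(0)). In words: for eigenvalues λ_j = b + ij, j ∈ ℤ \ {0}, the ratio of the spectral determinants for the branch cut on the positive real axis (arguments in (0, 2π)) and for the branch cut on the negative real axis (arguments in (π, 3π)) equals −e^{2bπ}. -/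
open Complex Real

/-
The two zeta functions differ only in the phase of the `H`-term, `e^{-iπs/2}` versus
`e^{-5iπs/2}`, and both phases equal `1` at `s = 0`. So by the product rule only the
derivatives of these phases survive in the difference of the derivatives:
`ζ₁'(0) - ζ₂'(0) = (-iπ/2 + 5iπ/2) H(0) = 2πi (-1/2 + ib) = -iπ - 2πb`,
and exponentiating, `e^{iπ} = -1` produces the sign.
-/

theorem HasDerivAt.cexp_const_mul_mul {f : ℂ → ℂ} {f' : ℂ} (c : ℂ) (hf : HasDerivAt f f' 0) :
    HasDerivAt (fun s => cexp (c * s) * f s) (c * f 0 + f') 0 := by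
  have hexp : HasDerivAt (fun s : ℂ => cexp (c * s)) c 0 := by
    simpa using ((hasDerivAt_id (0 : ℂ)).const_mul c).cexp
  simpa using hexp.fun_mul hf

theorem hasDerivAt_cexp_mul_add_cexp_mul {H K : ℂ → ℂ} (c d : ℂ)
    (hH : DifferentiableAt ℂ H 0) (hK : DifferentiableAt ℂ K 0) :
    HasDerivAt (fun s => cexp (c * s) * H s + cexp (d * s) * K s)
      (c * H 0 + deriv H 0 + (d * K 0 + deriv K 0)) 0 :=
  (HasDerivAt.cexp_const_mul_mul c hH.hasDerivAt).add
    (HasDerivAt.cexp_const_mul_mul d hK.hasDerivAt)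

/-- For eigenvalues `λ_j = b + ij`, `j ∈ ℤ \ {0}`, the ratio of the spectral
determinants for the branch cut on the positive real axis (arguments in `(0, 2π)`,
zeta function `ζ₁`) and on the negative real axis (arguments in `(π, 3π)`, zeta
function `ζ₂`) equals `−e^{2bπ}`. Here `H` and `K` play the roles of the Hurwitz zeta
functions `s ↦ ζ_H(s, 1 − ib)` and `s ↦ ζ_H(s, 1 + ib)`, with
`ζ_H(0, 1 − ib) = −1/2 + ib`. -/
theorem vertical_line_determinant_ratio
    (b : ℝ) (H K : ℂ → ℂ)
    (hH : DifferentiableAt ℂ H 0) (hK : DifferentiableAt ℂ K 0)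
    (hH0 : H 0 = -(1 / 2) + Complex.I * b)
    (ζ₁ ζ₂ : ℂ → ℂ)
    (hζ₁ : ∀ s : ℂ, ζ₁ s = Complex.exp (-(Complex.I * Real.pi * s / 2)) * H s +
      Complex.exp (-(3 * Complex.I * Real.pi * s / 2)) * K s)
    (hζ₂ : ∀ s : ℂ, ζ₂ s = Complex.exp (-(5 * Complex.I * Real.pi * s / 2)) * H s +
      Complex.exp (-(3 * Complex.I * Real.pi * s / 2)) * K s) :
    DifferentiableAt ℂ ζ₁ 0 ∧ DifferentiableAt ℂ ζ₂ 0 ∧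
      Complex.exp (-(deriv ζ₁ 0)) =
        -Complex.exp (2 * b * Real.pi) * Complex.exp (-(deriv ζ₂ 0)) := by
  have hζ₁' : ζ₁ = fun s =>
      cexp (-(I * π / 2) * s) * H s + cexp (-(3 * I * π / 2) * s) * K s := by
    funext s; rw [hζ₁ s]; ring_nf
  have hζ₂' : ζ₂ = fun s =>
      cexp (-(5 * I * π / 2) * s) * H s + cexp (-(3 * I * π / 2) * s) * K s := by
    funext s; rw [hζ₂ s]; ring_nf
  have d₁ := hζ₁' ▸ hasDerivAt_cexp_mul_add_cexp_mul _ _ hH hK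
  have d₂ := hζ₂' ▸ hasDerivAt_cexp_mul_add_cexp_mul _ _ hH hK
  refine ⟨d₁.differentiableAt, d₂.differentiableAt, ?_⟩
  have hderiv : -deriv ζ₁ 0 = (π * I + 2 * b * π) + -deriv ζ₂ 0 := by
    rw [d₁.deriv, d₂.deriv, hH0]
    linear_combination (-2 * π * b : ℂ) * I_sq
  rw [hderiv, Complex.exp_add, Complex.exp_add, exp_pi_mul_I]
  ring
end
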